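/- arXiv:2312.14329 — 2 statements merged into one kernel-verified Lean document; each statement's English description precedes it below -/
import Mathlib

section
/- Let Ω be a probability space and let W : Ω → 𝒲, E : Ω → ℰ, N : Ω → 𝒩 be random variables into measurable spaces that are mutually independent. Let h : 𝒲 × 𝒩 → 𝒳 be measurable and define X_a(ω) = h(W(ω), N(ω)). Let Z : Ω → 𝒵 be a random variable whose generated σ-algebra is contained in that of X_a, i.e. MeasurableSpace.comap Z ≤ MeasurableSpace.comap X_a. Then Z and E are independent random variables. -/
/-!
The anomaly features `X_a = h (W, N)` are a function of `(W, N)`, so `σ(Z) ⊆ σ(X_a) ⊆ σ(W) ⊔ σ(N)`.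
Grouping the mutually independent family `(W, E, N)` into the blocks `{W, N}` and `{E}` makes
`σ(W) ⊔ σ(N)` independent of `σ(E)`, and independence passes to the sub-σ-algebra `σ(Z)`.
-/

open MeasureTheory ProbabilityTheory

theorem MeasurableSpace.comap_comp_prodMk_le {α β γ δ : Type*} {mβ : MeasurableSpace β}
    {mγ : MeasurableSpace γ} {mδ : MeasurableSpace δ} {h : β × γ → δ} (hh : Measurable h)
    (X : α → β) (Y : α → γ) :
    mδ.comap (fun ω ↦ h (X ω, Y ω)) ≤ mβ.comap X ⊔ mγ.comap Y := by
  rw [← MeasurableSpace.comap_prodMk]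
  exact (MeasurableSpace.comap_comp (f := h) (g := fun ω ↦ (X ω, Y ω))).symm.trans_le
    (MeasurableSpace.comap_mono hh.comap_le)

theorem ProbabilityTheory.iIndep.indep_sup {Ω ι : Type*} {_mΩ : MeasurableSpace Ω}
    {μ : Measure Ω} {m : ι → MeasurableSpace Ω} (h_le : ∀ i, m i ≤ _mΩ) (h_indep : iIndep m μ)
    {i j k : ι} (hik : i ≠ k) (hjk : j ≠ k) :
    Indep (m i ⊔ m j) (m k) μ := by
  have hdisj : Disjoint ({i, j} : Set ι) {k} := by simp [hik.symm, hjk.symm]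
  simpa only [iSup_insert, iSup_singleton] using indep_iSup_of_disjoint h_le h_indep hdisj

theorem representation_indep_env_of_no_confounding_general
    {Ω 𝒲 ℰ 𝒩 𝒳 𝒵 : Type*} [MeasurableSpace Ω]
    [m𝒲 : MeasurableSpace 𝒲] [mℰ : MeasurableSpace ℰ] [m𝒩 : MeasurableSpace 𝒩]
    [m𝒳 : MeasurableSpace 𝒳] [m𝒵 : MeasurableSpace 𝒵]
    (μ : Measure Ω)
    (W : Ω → 𝒲) (E : Ω → ℰ) (N : Ω → 𝒩)
    (hW : Measurable W) (hE : Measurable E) (hN : Measurable N)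
    (hindep : iIndep
      ![MeasurableSpace.comap W m𝒲, MeasurableSpace.comap E mℰ,
        MeasurableSpace.comap N m𝒩] μ)
    (h : 𝒲 × 𝒩 → 𝒳) (hh : Measurable h)
    (Z : Ω → 𝒵)
    (hZ : MeasurableSpace.comap Z m𝒵 ≤
      MeasurableSpace.comap (fun ω => h (W ω, N ω)) m𝒳) :
    IndepFun Z E μ := by
  have h_le : ∀ i, ![m𝒲.comap W, mℰ.comap E, m𝒩.comap N] i ≤ ‹MeasurableSpace Ω› := by
    intro i
    fin_cases i
    exacts [hW.comap_le, hE.comap_le, hN.comap_le]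
  have hWN_indep_E : Indep (m𝒲.comap W ⊔ m𝒩.comap N) (mℰ.comap E) μ :=
    hindep.indep_sup h_le (i := 0) (j := 2) (k := 1) (by decide) (by decide)
  rw [IndepFun_iff_Indep]
  exact indep_of_indep_of_le_left hWN_indep_E
    (hZ.trans (MeasurableSpace.comap_comp_prodMk_le hh W N))

/-- Unconfounded case of the paper's Theorem 1: if `W`, `E`, `N` are mutually independent,
`X_a = h (W, N)` for measurable `h`, and the representation `Z` is `X_a`-measurable
(`σ(Z) ⊆ σ(X_a)`), then `Z` and `E` are independent. -/
theorem representation_indep_env_of_no_confounding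
    {Ω 𝒲 ℰ 𝒩 𝒳 𝒵 : Type*} [MeasurableSpace Ω]
    [m𝒲 : MeasurableSpace 𝒲] [mℰ : MeasurableSpace ℰ] [m𝒩 : MeasurableSpace 𝒩]
    [m𝒳 : MeasurableSpace 𝒳] [m𝒵 : MeasurableSpace 𝒵]
    (μ : Measure Ω) [IsProbabilityMeasure μ]
    (W : Ω → 𝒲) (E : Ω → ℰ) (N : Ω → 𝒩)
    (hW : Measurable W) (hE : Measurable E) (hN : Measurable N)
    (hindep : iIndep
      ![MeasurableSpace.comap W m𝒲, MeasurableSpace.comap E mℰ,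
        MeasurableSpace.comap N m𝒩] μ)
    (h : 𝒲 × 𝒩 → 𝒳) (hh : Measurable h)
    (Z : Ω → 𝒵)
    (hZ : MeasurableSpace.comap Z m𝒵 ≤
      MeasurableSpace.comap (fun ω => h (W ω, N ω)) m𝒳) :
    IndepFun Z E μ :=
  representation_indep_env_of_no_confounding_general (m𝒲 := m𝒲) (mℰ := mℰ) (m𝒩 := m𝒩) (m𝒳 := m𝒳)
    (m𝒵 := m𝒵) μ W E N hW hE hN hindep h hh Z hZ
end

section
/- Let Ω be a standard Borel probability space and let U : Ω → 𝒰, M₁ : Ω → ℳ₁, M₂ : Ω → ℳ₂, N : Ω → 𝒩 be mutually independent random variables into measurable spaces. Define W(ω) = φ(U(ω), M₁(ω)), E(ω) = ψ(U(ω), M₂(ω)), and X_a(ω) = h(W(ω), N(ω)) for measurable maps φ, ψ, h. Let Z : Ω → 𝒵 be a random variable whose generated σ-algebra is contained in that of X_a, i.e. MeasurableSpace.comap Z ≤ MeasurableSpace.comap X_a. Then Z and E are conditionally independent given the σ-algebra generated by W. -/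
/-!
Put `G = σ(U, M₁, M₂)`. Then `σ(W) ≤ G`, `σ(E) ≤ G`, `σ(Z) ≤ σ(X_a) ≤ σ(W) ⊔ σ(N)`, and `σ(N)`
is independent of `G`. Independence of `σ(N)` from `G ⊇ σ(W)` survives conditioning on `σ(W)`,
and a σ-algebra stays conditionally independent of `G` after adjoining the conditioning
σ-algebra `σ(W)` to it. Hence `σ(W) ⊔ σ(N)`, and a fortiori `σ(Z)`, is conditionally independent
of `G ⊇ σ(E)` given `σ(W)`.
-/

open MeasureTheory ProbabilityTheory MeasurableSpace

lemma MeasurableSpace.comap_comp_prodMk_le_sup {Ω α β γ : Type*} [mα : MeasurableSpace α]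
    [mβ : MeasurableSpace β] [mγ : MeasurableSpace γ] (f : Ω → α) (g : Ω → β) (k : α × β → γ)
    (hk : Measurable k) :
    mγ.comap (fun ω => k (f ω, g ω)) ≤ mα.comap f ⊔ mβ.comap g :=
  Measurable.comap_le <| hk.comp <|
    (comap_measurable f).mono le_sup_left le_rfl |>.prodMk <|
      (comap_measurable g).mono le_sup_right le_rfl

lemma IsPiSystem.image2_inter {α : Type*} {C D : Set (Set α)} (hC : IsPiSystem C)
    (hD : IsPiSystem D) : IsPiSystem (Set.image2 (· ∩ ·) C D) := by
  rintro _ ⟨a₁, ha₁, b₁, hb₁, rfl⟩ _ ⟨a₂, ha₂, b₂, hb₂, rfl⟩ hne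
  refine ⟨a₁ ∩ a₂, hC _ ha₁ _ ha₂ ?_, b₁ ∩ b₂, hD _ hb₁ _ hb₂ ?_, Set.inter_inter_inter_comm ..⟩
  · exact hne.mono fun x hx => ⟨hx.1.1, hx.2.1⟩
  · exact hne.mono fun x hx => ⟨hx.1.2, hx.2.2⟩

lemma MeasurableSpace.sup_eq_generateFrom_image2_inter {Ω : Type*} (m₁ m₂ : MeasurableSpace Ω) :
    m₁ ⊔ m₂ = generateFrom
      (Set.image2 (· ∩ ·) {s | MeasurableSet[m₁] s} {s | MeasurableSet[m₂] s}) := by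
  refine le_antisymm (sup_le ?_ ?_) (generateFrom_le ?_)
  · exact fun s hs => measurableSet_generateFrom ⟨s, hs, _, @MeasurableSet.univ _ m₂, s.inter_univ⟩
  · exact fun s hs => measurableSet_generateFrom ⟨_, @MeasurableSet.univ _ m₁, s, hs, s.univ_inter⟩
  · rintro _ ⟨a, ha, b, hb, rfl⟩
    exact (le_sup_left (b := m₂) _ ha).inter (le_sup_right (a := m₁) _ hb)

lemma ProbabilityTheory.iIndep.indep_sup_sup_fin_four {Ω : Type*} {mΩ : MeasurableSpace Ω}
    {μ : Measure Ω} {m : Fin 4 → MeasurableSpace Ω} (hle : ∀ i, m i ≤ mΩ) (h : iIndep m μ) :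
    Indep (m 0 ⊔ m 1 ⊔ m 2) (m 3) μ := by
  have hdisj : Disjoint ({0, 1, 2} : Set (Fin 4)) {3} := by simp [Set.disjoint_left]
  simpa [iSup_or, iSup_sup_eq, sup_assoc] using indep_iSup_of_disjoint hle h hdisj

namespace MeasureTheory

variable {Ω : Type*} {m m₁ m₂ mΩ : MeasurableSpace Ω} {μ : Measure Ω} [IsFiniteMeasure μ]

lemma condExp_inter_ae_eq_indicator {s t : Set Ω} (hs : MeasurableSet[m] s)
    (ht : MeasurableSet t) : μ⟦s ∩ t | m⟧ =ᵐ[μ] s.indicator (μ⟦t | m⟧) := by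
  rw [← Set.indicator_indicator]
  exact condExp_indicator ((integrable_const 1).indicator ht) hs

lemma condExp_indicator_ae_eq_measureReal_of_indep (hm₁ : m₁ ≤ mΩ) (hm₂ : m₂ ≤ mΩ)
    (h : Indep m₁ m₂ μ) {s : Set Ω} (hs : MeasurableSet[m₁] s) :
    μ⟦s | m₂⟧ =ᵐ[μ] fun _ => μ.real s := by
  rw [← integral_indicator_one (hm₁ _ hs)]
  exact condExp_indep_eq hm₁ hm₂ (stronglyMeasurable_const.indicator hs) h

end MeasureTheory

namespace ProbabilityTheory

variable {Ω : Type*} {m' m₁ m₂ mΩ : MeasurableSpace Ω} [StandardBorelSpace Ω]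
  {μ : Measure Ω} [IsFiniteMeasure μ]

lemma Indep.condIndep_of_le_right (h : Indep m₁ m₂ μ) (hm' : m' ≤ m₂) (hm₁ : m₁ ≤ mΩ)
    (hm₂ : m₂ ≤ mΩ) : CondIndep m' m₁ m₂ (hm'.trans hm₂) μ := by
  rw [condIndep_iff _ _ _ _ hm₁ hm₂]
  intro s t hs ht
  have hs' : μ⟦s | m'⟧ =ᵐ[μ] fun _ => μ.real s :=
    condExp_indicator_ae_eq_measureReal_of_indep hm₁ (hm'.trans hm₂)
      (indep_of_indep_of_le_right h hm') hs
  have hts : μ⟦t ∩ s | m₂⟧ =ᵐ[μ] μ.real s • t.indicator fun _ => 1 := by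
    filter_upwards [condExp_inter_ae_eq_indicator ht (hm₁ _ hs),
      condExp_indicator_ae_eq_measureReal_of_indep hm₁ hm₂ h hs] with x hx hsx
    by_cases hxt : x ∈ t <;> simp [hx, hsx, hxt]
  calc μ⟦s ∩ t | m'⟧ =ᵐ[μ] μ[μ⟦t ∩ s | m₂⟧ | m'] := by
        rw [Set.inter_comm]; exact (condExp_condExp_of_le hm' hm₂).symm
    _ =ᵐ[μ] μ[μ.real s • t.indicator fun _ => 1 | m'] := condExp_congr_ae hts
    _ =ᵐ[μ] μ.real s • μ⟦t | m'⟧ := condExp_smul _ _ _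
    _ =ᵐ[μ] μ⟦s | m'⟧ * μ⟦t | m'⟧ := by
        filter_upwards [hs'] with x hx
        simp [hx]

lemma CondIndep.sup_self_left {hm' : m' ≤ mΩ} (hm₁ : m₁ ≤ mΩ) (hm₂ : m₂ ≤ mΩ)
    (h : CondIndep m' m₁ m₂ hm' μ) : CondIndep m' (m' ⊔ m₁) m₂ hm' μ := by
  refine CondIndepSets.condIndep (sup_le hm' hm₁) hm₂
    ((@isPiSystem_measurableSet Ω m').image2_inter (@isPiSystem_measurableSet Ω m₁))
    (@isPiSystem_measurableSet Ω m₂)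
    (sup_eq_generateFrom_image2_inter m' m₁) (@generateFrom_measurableSet Ω m₂).symm ?_
  have hp₁ : ∀ s ∈ Set.image2 (· ∩ ·) {s | MeasurableSet[m'] s} {s | MeasurableSet[m₁] s},
      MeasurableSet s := by
    rintro _ ⟨a, ha, b, hb, rfl⟩
    exact (hm' _ ha).inter (hm₁ _ hb)
  rw [condIndepSets_iff _ _ _ {t | MeasurableSet[m₂] t} hp₁ fun t ht => hm₂ _ ht]
  rintro _ t ⟨a, ha, b, hb, rfl⟩ ht
  have hbt := (condIndep_iff _ _ _ _ hm₁ hm₂ μ).1 h b t hb ht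
  calc μ⟦a ∩ b ∩ t | m'⟧ =ᵐ[μ] a.indicator (μ⟦b ∩ t | m'⟧) := by
        rw [Set.inter_assoc]
        exact condExp_inter_ae_eq_indicator ha ((hm₁ _ hb).inter (hm₂ _ ht))
    _ =ᵐ[μ] a.indicator (μ⟦b | m'⟧) * μ⟦t | m'⟧ := by
        filter_upwards [hbt] with x hx
        by_cases hxa : x ∈ a <;> simp [hx, hxa]
    _ =ᵐ[μ] μ⟦a ∩ b | m'⟧ * μ⟦t | m'⟧ :=
        (condExp_inter_ae_eq_indicator ha (hm₁ _ hb)).symm.mul Filter.EventuallyEq.rfl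

end ProbabilityTheory

/-- Confounded case of the paper's Theorem 1: with a latent confounder `U` of
`W = φ (U, M₁)` and `E = ψ (U, M₂)`, content features `X_a = h (W, N)`, and a
representation `Z` that is `X_a`-measurable (`σ(Z) ⊆ σ(X_a)`), the variables `Z` and `E`
are conditionally independent given the σ-algebra generated by `W`. -/
theorem representation_condIndep_env_of_confounding
    {Ω 𝒰 ℳ₁ ℳ₂ 𝒩 𝒲 ℰ 𝒳 𝒵 : Type*}
    [MeasurableSpace Ω] [StandardBorelSpace Ω]
    [m𝒰 : MeasurableSpace 𝒰] [mℳ₁ : MeasurableSpace ℳ₁] [mℳ₂ : MeasurableSpace ℳ₂]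
    [m𝒩 : MeasurableSpace 𝒩] [m𝒲 : MeasurableSpace 𝒲] [mℰ : MeasurableSpace ℰ]
    [m𝒳 : MeasurableSpace 𝒳] [m𝒵 : MeasurableSpace 𝒵]
    (μ : Measure Ω) [IsProbabilityMeasure μ]
    (U : Ω → 𝒰) (M₁ : Ω → ℳ₁) (M₂ : Ω → ℳ₂) (N : Ω → 𝒩)
    (hU : Measurable U) (hM₁ : Measurable M₁) (hM₂ : Measurable M₂) (hN : Measurable N)
    (hindep : iIndep
      ![MeasurableSpace.comap U m𝒰, MeasurableSpace.comap M₁ mℳ₁,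
        MeasurableSpace.comap M₂ mℳ₂, MeasurableSpace.comap N m𝒩] μ)
    (φ : 𝒰 × ℳ₁ → 𝒲) (ψ : 𝒰 × ℳ₂ → ℰ) (h : 𝒲 × 𝒩 → 𝒳)
    (hφ : Measurable φ) (hψ : Measurable ψ) (hh : Measurable h)
    (Z : Ω → 𝒵)
    (hZ : MeasurableSpace.comap Z m𝒵 ≤
      MeasurableSpace.comap (fun ω => h (φ (U ω, M₁ ω), N ω)) m𝒳) :
    CondIndepFun (MeasurableSpace.comap (fun ω => φ (U ω, M₁ ω)) m𝒲)
      ((hφ.comp (hU.prodMk hM₁)).comap_le)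
      Z (fun ω => ψ (U ω, M₂ ω)) μ := by
  rename_i mΩ _ _
  set G := m𝒰.comap U ⊔ mℳ₁.comap M₁ ⊔ mℳ₂.comap M₂
  have hGΩ : G ≤ mΩ := sup_le (sup_le hU.comap_le hM₁.comap_le) hM₂.comap_le
  have hWG : m𝒲.comap (fun ω => φ (U ω, M₁ ω)) ≤ G :=
    (comap_comp_prodMk_le_sup U M₁ φ hφ).trans le_sup_left
  have hEG : mℰ.comap (fun ω => ψ (U ω, M₂ ω)) ≤ G :=
    (comap_comp_prodMk_le_sup U M₂ ψ hψ).trans (sup_le_sup_right le_sup_left _)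
  have hZWN : m𝒵.comap Z ≤ m𝒲.comap (fun ω => φ (U ω, M₁ ω)) ⊔ m𝒩.comap N :=
    hZ.trans (comap_comp_prodMk_le_sup _ N h hh)
  have hNG : Indep (m𝒩.comap N) G μ := by
    refine (iIndep.indep_sup_sup_fin_four (fun i => ?_) hindep).symm
    fin_cases i
    exacts [hU.comap_le, hM₁.comap_le, hM₂.comap_le, hN.comap_le]
  have hWN_G := (hNG.condIndep_of_le_right hWG hN.comap_le hGΩ).sup_self_left hN.comap_le hGΩ
  rw [condIndepFun_iff_condIndep]
  exact condIndep_of_condIndep_of_le_right (condIndep_of_condIndep_of_le_left hWN_G hZWN) hEG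
end
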